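/- For every context-free game G and every one-pass strategy σ for Juliet, there exists a terminating one-pass strategy σ' for Juliet such that W(σ) ⊆ W(σ'). -/
import Mathlib


namespace CFG

/-- Juliet's two kinds of moves. -/
inductive JMove : Type
  | call : JMove
  | read : JMove
deriving DecidableEq

/-- The extended alphabet Σ̂: `Sum.inl a` is the plain symbol `a`,
`Sum.inr a` is the "called" copy `â`. -/
abbrev HSym (A : Type) : Type := A ⊕ A

/-- The homomorphism ♮ deleting called symbols. -/
def flat {A : Type} (α : List (HSym A)) : List A :=
  α.filterMap (fun x => match x with | Sum.inl a => some a | Sum.inr _ => none)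

/-- A context-free game: a (minimal) DFA `T` over `A` with finite state set `Q`,
and a replacement relation `R` with nonempty replacement words and regular
replacement languages. -/
structure CFGame (A : Type) where
  Q : Type
  fintypeQ : Fintype Q
  T : DFA A Q
  minimal_reachable : ∀ q : Q, ∃ w : List A, T.evalFrom T.start w = q
  minimal_distinguishable :
    ∀ q q' : Q, (∀ w : List A, T.evalFrom q w ∈ T.accept ↔ T.evalFrom q' w ∈ T.accept) → q = q'
  R : A → List A → Prop
  R_ne : ∀ a v, R a v → v ≠ []
  R_regular : ∀ a, Language.IsRegular {v : List A | R a v}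

variable {A : Type}

/-- `a` is a function symbol (its replacement language is nonempty). -/
def CFGame.Fn (G : CFGame A) (a : A) : Prop := ∃ v, G.R a v

/-- One-pass strategies of Juliet (values at non-function symbols are irrelevant). -/
abbrev JStrat (A : Type) : Type := List (HSym A) → A → JMove

/-- Strategies of Romeo (values at non-function symbols are irrelevant). -/
abbrev RStrat (A : Type) : Type := List (HSym A) → A → List A

/-- Validity of a Romeo strategy: replacement words belong to the replacement language. -/
def CFGame.RValid (G : CFGame A) (τ : RStrat A) : Prop :=
  ∀ (α : List (HSym A)) (a : A), G.Fn a → G.R a (τ α a)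

/-- Configurations, instrumented for depth bookkeeping: a history string, the
remaining string where every symbol is annotated with its call-nesting level,
and the maximal nesting depth of the `Call` moves played so far. -/
abbrev Config (A : Type) : Type := List (HSym A) × List (A × ℕ) × ℕ

/-- One step of a play: Juliet reads or calls the current symbol according to `σ`
(a call is only possible at a function symbol); a call is answered by `τ`. -/
noncomputable def CFGame.step (G : CFGame A) (σ : JStrat A) (τ : RStrat A) :
    Config A → Config A :=
  fun c =>
    match c with
    | (α, [], d) => (α, [], d)
    | (α, (a, k) :: v, d) =>
      letI := Classical.propDecidable (G.Fn a ∧ σ α a = JMove.call)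
      if G.Fn a ∧ σ α a = JMove.call then
        (α ++ [Sum.inr a], (τ α a).map (fun b => (b, k + 1)) ++ v, max d (k + 1))
      else (α ++ [Sum.inl a], v, d)

/-- The play of `σ` against `τ` on input word `w`, as the sequence of its
configurations (the configuration stays fixed once the remaining string is empty). -/
noncomputable def CFGame.play (G : CFGame A) (σ : JStrat A) (τ : RStrat A)
    (w : List A) (n : ℕ) : Config A :=
  (G.step σ τ)^[n] ([], w.map (fun a => (a, 0)), 0)

/-- `σ` wins on `w`: against every (valid) Romeo strategy, the play on `w` is
finite and its final string belongs to the target language. -/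
def CFGame.WinsOn (G : CFGame A) (σ : JStrat A) (w : List A) : Prop :=
  ∀ τ : RStrat A, G.RValid τ →
    ∃ n : ℕ, (G.play σ τ w n).2.1 = [] ∧
      G.T.evalFrom G.T.start (flat (G.play σ τ w n).1) ∈ G.T.accept

/-- The winning set `W(σ)`. -/
def CFGame.W (G : CFGame A) (σ : JStrat A) : Set (List A) := {w | G.WinsOn σ w}

/-- `σ` is terminating: every play of `σ` is finite. -/
def CFGame.Terminating (G : CFGame A) (σ : JStrat A) : Prop :=
  ∀ τ : RStrat A, G.RValid τ → ∀ w : List A, ∃ n : ℕ, (G.play σ τ w n).2.1 = []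

/-- `σ` is dominant: it dominates every one-pass strategy. -/
def CFGame.Dominant (G : CFGame A) (σ : JStrat A) : Prop :=
  ∀ σ' : JStrat A, G.W σ' ⊆ G.W σ

/-- `σ` is undominated: no one-pass strategy strictly dominates it. -/
def CFGame.Undominated (G : CFGame A) (σ : JStrat A) : Prop :=
  ¬ ∃ σ' : JStrat A, G.W σ ⊂ G.W σ'

/-- `σ` is forgetful: its decisions only depend on `♮α` and the current symbol. -/
def CFGame.Forgetful (G : CFGame A) (σ : JStrat A) : Prop :=
  ∀ (α β : List (HSym A)) (a : A), G.Fn a → flat α = flat β → σ α a = σ β a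

/-- `σ` is regular: the language `{αa : σ(α,a) = Call}` over Σ̂ is regular. -/
def CFGame.RegularStrat (G : CFGame A) (σ : JStrat A) : Prop :=
  Language.IsRegular
    {x : List (HSym A) | ∃ (α : List (HSym A)) (a : A),
      G.Fn a ∧ σ α a = JMove.call ∧ x = α ++ [Sum.inl a]}

/-- One step of a strategy automaton of a strongly regular strategy, on the state
set `Q ∪ {Call}` (`none` is the absorbing state `Call`). -/
def optStep {Q : Type} (δA : Q → A → Option Q) (o : Option Q) (a : A) : Option Q :=
  o.bind (fun q => δA q a)

/-- `σ` is strongly regular: given by an automaton obtained from `T` by rerouting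
some transitions to a new accepting state `Call`; Juliet plays `Call` on `(α,a)`
iff the automaton maps `♮α·a` to `Call`. -/
def CFGame.StronglyRegular (G : CFGame A) (σ : JStrat A) : Prop :=
  ∃ δA : G.Q → A → Option G.Q,
    (∀ q a, δA q a = some (G.T.step q a) ∨ δA q a = none) ∧
    ∀ (α : List (HSym A)) (a : A), G.Fn a →
      (σ α a = JMove.call ↔
        List.foldl (optStep δA) (some G.T.start) (flat α ++ [a]) = none)

/-- Shortlex (strict) order on words. -/
def shortLex [LinearOrder A] (v w : List A) : Prop :=
  v.length < w.length ∨ (v.length = w.length ∧ List.Lex (· < ·) v w)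

/-- `V <_sl W` for sets of words: the shortlex-least word of the symmetric
difference belongs to `W`. -/
def slLT [LinearOrder A] (V W : Set (List A)) : Prop :=
  ∃ w : List A, w ∈ W ∧ w ∉ V ∧ ∀ v : List A, shortLex v w → (v ∈ V ↔ v ∈ W)

/-- `V ≤_sl W` for sets of words. -/
def slLE [LinearOrder A] (V W : Set (List A)) : Prop := V = W ∨ slLT V W

/-- `σ` is weakly dominant: `W(σ') ≤_sl W(σ)` for every one-pass strategy `σ'`. -/
def CFGame.WeaklyDominant [LinearOrder A] (G : CFGame A) (σ : JStrat A) : Prop :=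
  ∀ σ' : JStrat A, slLE (G.W σ') (G.W σ)

/-- The bounded depth property. -/
def CFGame.BoundedDepthProperty (G : CFGame A) : Prop :=
  ∃ B : ℕ → ℕ, ∀ σ : JStrat A, ∀ k : ℕ, ∃ σk : JStrat A,
    ∀ w ∈ G.W σ, w.length ≤ k →
      G.WinsOn σk w ∧
      ∀ τ : RStrat A, G.RValid τ → ∀ n : ℕ, (G.play σk τ w n).2.2 ≤ B w.length

/-- Prefix-freeness of all replacement languages. -/
def CFGame.PrefixFree (G : CFGame A) : Prop :=
  ∀ (a : A) (u v : List A), G.R a u → G.R a v → u <+: v → u = v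

/-- Non-recursiveness: no function symbol can be derived from itself. -/
def CFGame.NonRecursive (G : CFGame A) : Prop :=
  ¬ ∃ (n : ℕ) (f : ℕ → A), 1 ≤ n ∧ f 0 = f n ∧ (∀ i ≤ n, G.Fn (f i)) ∧
    ∀ k < n, ∃ v : List A, G.R (f k) v ∧ f (k + 1) ∈ v

/-- `σ` is almost undominated: only finitely many words are lost by `σ` but won
by some strategy dominating `σ`. -/
def CFGame.AlmostUndominated (G : CFGame A) (σ : JStrat A) : Prop :=
  Set.Finite {w : List A | ¬ G.WinsOn σ w ∧
    ∃ σ' : JStrat A, G.W σ ⊆ G.W σ' ∧ G.WinsOn σ' w}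

/-- Convergence of a sequence of one-pass strategies. -/
def Converges (G : CFGame A) (σs : ℕ → JStrat A) (σ : JStrat A) : Prop :=
  ∀ n : ℕ, ∃ k0 : ℕ, ∀ k ≥ k0, ∀ α : List (HSym A), α.length ≤ n →
    ∀ a : A, G.Fn a → σ α a = σs k α a

/-- The one-pass strategy defined by a DFA `M` over Σ̂ (a strategy automaton):
play `Call` on `(α,a)` iff `M` accepts `α·a`. -/
noncomputable def autoStrat {S : Type} (M : DFA (HSym A) S) : JStrat A :=
  fun α a =>
    letI := Classical.propDecidable (M.eval (α ++ [Sum.inl a]) ∈ M.accept)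
    if M.eval (α ++ [Sum.inl a]) ∈ M.accept then JMove.call else JMove.read

/-- `States(q; w, σ)`: the `T`-states `δ*(q, ♮α)` over final history strings `α`
of plays of `σ` on `w`. -/
def CFGame.StatesOf (G : CFGame A) (σ : JStrat A) (q : G.Q) (w : List A) : Set G.Q :=
  {q' | ∃ τ : RStrat A, G.RValid τ ∧ ∃ n : ℕ,
    (G.play σ τ w n).2.1 = [] ∧ G.T.evalFrom q (flat (G.play σ τ w n).1) = q'}

/-- `(p, a, S)` is an effect triple of `σ`. -/
def CFGame.IsEffectTriple (G : CFGame A) (σ : JStrat A) (t : G.Q × A × Set G.Q) : Prop :=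
  G.StatesOf σ t.1 [t.2.1] ⊆ t.2.2

/-- An effect triple is trivial if `δ(p,a) ∈ S`. -/
def CFGame.TrivialTriple (G : CFGame A) (t : G.Q × A × Set G.Q) : Prop :=
  G.T.step t.1 t.2.1 ∈ t.2.2

/-- The substrategy `σ^α`. -/
def subStrat (σ : JStrat A) (α : List (HSym A)) : JStrat A :=
  fun β a => σ (α ++ β) a

/-- The effect set `E(σ)`: all effect triples of all substrategies of `σ`. -/
def CFGame.EffectSet (G : CFGame A) (σ : JStrat A) : Set (G.Q × A × Set G.Q) :=
  {t | ∃ α : List (HSym A), G.IsEffectTriple (subStrat σ α) t}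

/-- The transition relation of the NFA `N_E` associated with a set `E` of effect
triples (state set `P(Q)`, initial state `{s}`, accepting states the subsets of `F`). -/
def CFGame.NEStep (G : CFGame A) (E : Set (G.Q × A × Set G.Q))
    (S : Set G.Q) (a : A) (S' : Set G.Q) : Prop :=
  ∀ p ∈ S, ∃ S'' : Set G.Q, S'' ⊆ S' ∧ (p, a, S'') ∈ E

/-- A strategy for the online word problem `OnlineNFA(N_E)`. -/
def CFGame.NEOnlineStrat (G : CFGame A) (E : Set (G.Q × A × Set G.Q))
    (ρ : List A → Set G.Q) : Prop :=
  ρ [] = {G.T.start} ∧ ∀ (w : List A) (a : A), G.NEStep E (ρ w) a (ρ (w ++ [a]))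

/-- The winning set of a strategy for `OnlineNFA(N_E)`. -/
def CFGame.NEWins (G : CFGame A) (ρ : List A → Set G.Q) : Set (List A) :=
  {w | ρ w ⊆ G.T.accept}

/-- A strategy automaton `M` is `(p,a,St)`-inducing. -/
def CFGame.Inducing (G : CFGame A) {S : Type} (M : DFA (HSym A) S)
    (p : G.Q) (a : A) (St : Set G.Q) : Prop :=
  G.Terminating (autoStrat M) ∧ G.Fn a ∧
  (∀ u : List A, G.R a u → G.StatesOf (autoStrat M) p u ⊆ St) ∧
  ∃ QA : G.Q → Set S,
    (∀ q ∈ St, ∀ q' ∈ St, q ≠ q' → Disjoint (QA q) (QA q')) ∧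
    ∀ u : List A, G.R a u → ∀ τ : RStrat A, G.RValid τ → ∀ n : ℕ,
      (G.play (autoStrat M) τ u n).2.1 = [] →
      ((∀ q ∈ St,
          (M.eval (G.play (autoStrat M) τ u n).1 ∈ QA q ↔
            G.T.evalFrom p (flat (G.play (autoStrat M) τ u n).1) = q)) ∧
        ∀ β : List (HSym A), β <+: (G.play (autoStrat M) τ u n).1 →
          β ≠ (G.play (autoStrat M) τ u n).1 → ∀ r ∈ St, M.eval β ∉ QA r)



section Tame

variable {A : Type}

lemma step_nil (G : CFGame A) (σ : JStrat A) (τ : RStrat A) (α : List (HSym A)) (d : ℕ) :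
    G.step σ τ (α, [], d) = (α, [], d) := rfl

lemma step_cons_call (G : CFGame A) (σ : JStrat A) (τ : RStrat A)
    (α : List (HSym A)) (a : A) (k : ℕ) (v : List (A × ℕ)) (d : ℕ)
    (h : G.Fn a ∧ σ α a = JMove.call) :
    G.step σ τ (α, (a, k) :: v, d) =
      (α ++ [Sum.inr a], (τ α a).map (fun b => (b, k + 1)) ++ v, max d (k + 1)) := by
  simp only [CFGame.step]
  rw [if_pos h]

lemma step_cons_read (G : CFGame A) (σ : JStrat A) (τ : RStrat A)
    (α : List (HSym A)) (a : A) (k : ℕ) (v : List (A × ℕ)) (d : ℕ)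
    (h : ¬ (G.Fn a ∧ σ α a = JMove.call)) :
    G.step σ τ (α, (a, k) :: v, d) = (α ++ [Sum.inl a], v, d) := by
  simp only [CFGame.step]
  rw [if_neg h]

/-- Once the remaining string is empty, the configuration is fixed. -/
lemma iter_of_nil (G : CFGame A) (σ : JStrat A) (τ : RStrat A)
    (c : Config A) (h : c.2.1 = []) (m : ℕ) :
    (G.step σ τ)^[m] c = c := by
  obtain ⟨α, v, d⟩ := c
  simp only at h
  subst h
  induction m with
  | zero => rfl
  | succ m ih => rw [Function.iterate_succ_apply', ih, step_nil]

lemma rest_ne_of_le (G : CFGame A) (σ : JStrat A) (τ : RStrat A)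
    (c : Config A) {m n : ℕ} (hmn : m ≤ n)
    (h : ((G.step σ τ)^[n] c).2.1 ≠ []) : ((G.step σ τ)^[m] c).2.1 ≠ [] := by
  intro he
  apply h
  obtain ⟨k, rfl⟩ := Nat.exists_eq_add_of_le hmn
  rw [Nat.add_comm, Function.iterate_add_apply,
    iter_of_nil G σ τ _ he, he]

/-- The history and the underlying symbols of the remaining string do not
depend on the annotations nor the depth counter. -/
lemma iter_indep (G : CFGame A) (σ : JStrat A) (τ : RStrat A) :
    ∀ (n : ℕ) (α : List (HSym A)) (v v' : List (A × ℕ)) (d d' : ℕ),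
    v.map Prod.fst = v'.map Prod.fst →
    ((G.step σ τ)^[n] (α, v, d)).1 = ((G.step σ τ)^[n] (α, v', d')).1 ∧
    ((G.step σ τ)^[n] (α, v, d)).2.1.map Prod.fst =
      ((G.step σ τ)^[n] (α, v', d')).2.1.map Prod.fst := by
  intro n
  induction n with
  | zero => intro α v v' d d' h; exact ⟨rfl, h⟩
  | succ n ih =>
    intro α v v' d d' h
    rw [Function.iterate_succ_apply, Function.iterate_succ_apply]
    match v, v', h with
    | [], [], _ => rw [step_nil, step_nil]; exact ih α [] [] d d' rfl
    | (a, k) :: v, (a', k') :: v', h =>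
      simp only [List.map_cons, List.cons.injEq] at h
      obtain ⟨rfl, hv⟩ := h
      by_cases hc : G.Fn a ∧ σ α a = JMove.call
      · rw [step_cons_call G σ τ _ _ _ _ _ hc, step_cons_call G σ τ _ _ _ _ _ hc]
        apply ih
        simp [hv]
      · rw [step_cons_read G σ τ _ _ _ _ _ hc, step_cons_read G σ τ _ _ _ _ _ hc]
        exact ih _ _ _ _ _ hv

/-- The history extends by one symbol at each step. -/
lemma step_hist (G : CFGame A) (σ : JStrat A) (τ : RStrat A)
    (c : Config A) (h : c.2.1 ≠ []) :
    ∃ x, (G.step σ τ c).1 = c.1 ++ [x] := by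
  obtain ⟨α, v, d⟩ := c
  match v with
  | [] => exact absurd rfl h
  | (a, k) :: v =>
    by_cases hc : G.Fn a ∧ σ α a = JMove.call
    · exact ⟨Sum.inr a, by rw [step_cons_call G σ τ _ _ _ _ _ hc]⟩
    · exact ⟨Sum.inl a, by rw [step_cons_read G σ τ _ _ _ _ _ hc]⟩

lemma iter_prefix (G : CFGame A) (σ : JStrat A) (τ : RStrat A)
    (c : Config A) (n : ℕ) : c.1 <+: ((G.step σ τ)^[n] c).1 := by
  induction n with
  | zero => exact List.prefix_refl _
  | succ n ih =>
    rw [Function.iterate_succ_apply']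
    refine ih.trans ?_
    by_cases h : ((G.step σ τ)^[n] c).2.1 = []
    · rw [show (G.step σ τ) ((G.step σ τ)^[n] c) = (G.step σ τ)^[n] c from
        iter_of_nil G σ τ _ h 1]
    · obtain ⟨x, hx⟩ := step_hist G σ τ _ h
      rw [hx]; exact List.prefix_append _ _

lemma iter_hist_len (G : CFGame A) (σ : JStrat A) (τ : RStrat A)
    (c : Config A) : ∀ n : ℕ, ((G.step σ τ)^[n] c).2.1 ≠ [] →
    ((G.step σ τ)^[n] c).1.length = c.1.length + n := by
  intro n
  induction n with
  | zero => intro _; rfl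
  | succ n ih =>
    intro h
    have hn : ((G.step σ τ)^[n] c).2.1 ≠ [] :=
      rest_ne_of_le G σ τ c (Nat.le_succ n) h
    rw [Function.iterate_succ_apply']
    obtain ⟨x, hx⟩ := step_hist G σ τ _ hn
    rw [hx, List.length_append, ih hn]
    simp [Nat.add_assoc]

/-- Two Romeo strategies agreeing above `β` yield the same plays from history `β`. -/
lemma iter_congr_tau (G : CFGame A) (σ : JStrat A) (τ1 τ2 : RStrat A)
    (β : List (HSym A)) (hag : ∀ γ, β <+: γ → ∀ b, τ1 γ b = τ2 γ b)
    (v : List (A × ℕ)) (d : ℕ) :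
    ∀ n, (G.step σ τ1)^[n] (β, v, d) = (G.step σ τ2)^[n] (β, v, d) := by
  intro n
  induction n with
  | zero => rfl
  | succ n ih =>
    rw [Function.iterate_succ_apply', Function.iterate_succ_apply', ih]
    rcases hE : (G.step σ τ2)^[n] (β, v, d) with ⟨γ, rest, e⟩
    have hpre : β <+: γ := by
      have := iter_prefix G σ τ2 (β, v, d) n
      rw [hE] at this; exact this
    match rest with
    | [] => rw [step_nil, step_nil]
    | (a, k) :: r =>
      by_cases hc : G.Fn a ∧ σ γ a = JMove.call
      · rw [step_cons_call G σ τ1 _ _ _ _ _ hc, step_cons_call G σ τ2 _ _ _ _ _ hc,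
          hag γ hpre a]
      · rw [step_cons_read G σ τ1 _ _ _ _ _ hc, step_cons_read G σ τ2 _ _ _ _ _ hc]

/-- Two Juliet strategies agreeing at the head symbol yield the same step. -/
lemma step_congr_sigma (G : CFGame A) (σ1 σ2 : JStrat A) (τ : RStrat A)
    (γ : List (HSym A)) (a : A) (k : ℕ) (r : List (A × ℕ)) (e : ℕ)
    (h : σ1 γ a = σ2 γ a) :
    G.step σ1 τ (γ, (a, k) :: r, e) = G.step σ2 τ (γ, (a, k) :: r, e) := by
  by_cases hc : G.Fn a ∧ σ2 γ a = JMove.call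
  · have hc1 : G.Fn a ∧ σ1 γ a = JMove.call := ⟨hc.1, h.trans hc.2⟩
    rw [step_cons_call G σ1 τ _ _ _ _ _ hc1, step_cons_call G σ2 τ _ _ _ _ _ hc]
  · have hc1 : ¬ (G.Fn a ∧ σ1 γ a = JMove.call) := by
      intro hh; exact hc ⟨hh.1, h.symm.trans hh.2⟩
    rw [step_cons_read G σ1 τ _ _ _ _ _ hc1, step_cons_read G σ2 τ _ _ _ _ _ hc]

/-- Composition: as long as the play on `v` has not finished, the play on
`v ++ u` looks the same with `u` appended. -/
lemma iter_append (G : CFGame A) (σ : JStrat A) (τ : RStrat A)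
    (α : List (HSym A)) (v u : List (A × ℕ)) (d d' : ℕ) :
    ∀ n, ((G.step σ τ)^[n] (α, v, d)).2.1 ≠ [] →
    ((G.step σ τ)^[n] (α, v ++ u, d')).1 = ((G.step σ τ)^[n] (α, v, d)).1 ∧
    ((G.step σ τ)^[n] (α, v ++ u, d')).2.1 = ((G.step σ τ)^[n] (α, v, d)).2.1 ++ u := by
  intro n
  induction n with
  | zero => intro _; exact ⟨rfl, rfl⟩
  | succ n ih =>
    intro h
    have hn : ((G.step σ τ)^[n] (α, v, d)).2.1 ≠ [] :=
      rest_ne_of_le G σ τ _ (Nat.le_succ n) h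
    obtain ⟨h1, h2⟩ := ih hn
    rw [Function.iterate_succ_apply', Function.iterate_succ_apply']
    generalize hC : (G.step σ τ)^[n] (α, v, d) = c at h1 h2 hn ⊢
    generalize hD : (G.step σ τ)^[n] (α, v ++ u, d') = c' at h1 h2 ⊢
    obtain ⟨γ, rest, e⟩ := c
    obtain ⟨γ', rest', e'⟩ := c'
    simp only at h1 h2 hn ⊢
    rw [h1, h2]
    match rest, hn with
    | [], hn => exact absurd rfl hn
    | (a, k) :: r, _ =>
      simp only [List.cons_append]
      by_cases hc : G.Fn a ∧ σ γ a = JMove.call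
      · rw [step_cons_call G σ τ _ _ _ _ _ hc, step_cons_call G σ τ _ _ _ _ _ hc]
        exact ⟨rfl, by simp⟩
      · rw [step_cons_read G σ τ _ _ _ _ _ hc, step_cons_read G σ τ _ _ _ _ _ hc]
        exact ⟨rfl, rfl⟩

/-- Composition at the first emptying step. -/
lemma iter_append_empty (G : CFGame A) (σ : JStrat A) (τ : RStrat A)
    (hτ : G.RValid τ) (α : List (HSym A)) (v u : List (A × ℕ)) (d d' : ℕ)
    (hv : v ≠ []) (n : ℕ) (hn : ((G.step σ τ)^[n] (α, v, d)).2.1 = [])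
    (hmin : ∀ m < n, ((G.step σ τ)^[m] (α, v, d)).2.1 ≠ []) :
    ((G.step σ τ)^[n] (α, v ++ u, d')).1 = ((G.step σ τ)^[n] (α, v, d)).1 ∧
    ((G.step σ τ)^[n] (α, v ++ u, d')).2.1 = u := by
  match n with
  | 0 => exact absurd hn hv
  | m + 1 =>
    have hm : ((G.step σ τ)^[m] (α, v, d)).2.1 ≠ [] := hmin m (Nat.lt_succ_self m)
    obtain ⟨h1, h2⟩ := iter_append G σ τ α v u d d' m hm
    rw [Function.iterate_succ_apply'] at hn
    rw [Function.iterate_succ_apply', Function.iterate_succ_apply']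
    generalize hC : (G.step σ τ)^[m] (α, v, d) = c at h1 h2 hm hn ⊢
    generalize hD : (G.step σ τ)^[m] (α, v ++ u, d') = c' at h1 h2 ⊢
    obtain ⟨γ, rest, e⟩ := c
    obtain ⟨γ', rest', e'⟩ := c'
    simp only at h1 h2 hm hn ⊢
    rw [h1, h2]
    match rest, hm with
    | [], hm => exact absurd rfl hm
    | (a, k) :: r, _ =>
      simp only [List.cons_append]
      by_cases hc : G.Fn a ∧ σ γ a = JMove.call
      · exfalso
        rw [step_cons_call G σ τ _ _ _ _ _ hc] at hn
        simp only [List.append_eq_nil_iff, List.map_eq_nil_iff] at hn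
        exact G.R_ne a _ (hτ γ a hc.1) hn.1
      · rw [step_cons_read G σ τ _ _ _ _ _ hc] at hn ⊢
        rw [step_cons_read G σ τ _ _ _ _ _ hc]
        simp only at hn
        subst hn
        exact ⟨rfl, rfl⟩

/-- `σ`'s sub-play from history `α` on the single symbol `a` always terminates. -/
def goodAt (G : CFGame A) (σ : JStrat A) (α : List (HSym A)) (a : A) : Prop :=
  ∀ τ : RStrat A, G.RValid τ → ∃ n, ((G.step σ τ)^[n] (α, [(a, 0)], 0)).2.1 = []

/-- The tamed version of `σ`: read whenever `σ` could loop from here. -/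
noncomputable def tame (G : CFGame A) (σ : JStrat A) : JStrat A :=
  fun α a =>
    letI := Classical.propDecidable (goodAt G σ α a)
    if goodAt G σ α a then σ α a else JMove.read

lemma tame_of_good {G : CFGame A} {σ : JStrat A} {α : List (HSym A)} {a : A}
    (h : goodAt G σ α a) : tame G σ α a = σ α a := by
  simp only [tame]
  split <;> [rfl; exact absurd h (by assumption)]

lemma tame_of_not_good {G : CFGame A} {σ : JStrat A} {α : List (HSym A)} {a : A}
    (h : ¬ goodAt G σ α a) : tame G σ α a = JMove.read := by
  simp only [tame]
  split <;> [exact absurd (by assumption) h; rfl]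

/-- All plays of `σ` from `(α, v)` terminate. -/
def goodFrom (G : CFGame A) (σ : JStrat A) (α : List (HSym A)) (v : List (A × ℕ)) : Prop :=
  ∀ τ : RStrat A, G.RValid τ → ∀ d : ℕ, ∃ n, ((G.step σ τ)^[n] (α, v, d)).2.1 = []

lemma goodAt_of_goodFrom {G : CFGame A} {σ : JStrat A} {α : List (HSym A)} {a : A}
    {k d : ℕ} (h : goodAt G σ α a) (τ : RStrat A) (hτ : G.RValid τ) :
    ∃ n, ((G.step σ τ)^[n] (α, [(a, k)], d)).2.1 = [] := by
  obtain ⟨n, hn⟩ := h τ hτ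
  refine ⟨n, ?_⟩
  have := (iter_indep G σ τ n α [(a, 0)] [(a, k)] 0 d (by simp)).2
  rw [hn] at this
  exact List.map_eq_nil_iff.mp this.symm

/-- Main lemma: where `σ` always terminates, `tame σ` plays exactly like `σ`. -/
lemma tame_play_eq (G : CFGame A) (σ : JStrat A) (α : List (HSym A))
    (v : List (A × ℕ)) (d : ℕ) (hg : goodFrom G σ α v)
    (τ : RStrat A) (hτ : G.RValid τ) :
    ∀ n, (G.step (tame G σ) τ)^[n] (α, v, d) = (G.step σ τ)^[n] (α, v, d) := by
  intro n
  induction n with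
  | zero => rfl
  | succ n ih =>
    rw [Function.iterate_succ_apply', Function.iterate_succ_apply', ih]
    rcases hcfg : (G.step σ τ)^[n] (α, v, d) with ⟨γ, rest, e⟩
    match rest with
    | [] => rw [step_nil, step_nil]
    | (b, j) :: r =>
      -- claim: goodAt G σ γ b
      have hgood : goodAt G σ γ b := by
        by_contra hng
        simp only [goodAt] at hng
        push_neg at hng
        obtain ⟨τ'', hτ'', hinf⟩ := hng
        -- combined Romeo strategy
        set τs : RStrat A := fun γ' b' =>
          letI := Classical.propDecidable (γ <+: γ')
          if γ <+: γ' then τ'' γ' b' else τ γ' b' with hτs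
        have hτsv : G.RValid τs := by
          intro β b' hb'
          simp only [hτs]
          split
          · exact hτ'' β b' hb'
          · exact hτ β b' hb'
        have hrestn : ((G.step σ τ)^[n] (α, v, d)).2.1 ≠ [] := by
          rw [hcfg]; simp
        have hlen : γ.length = α.length + n := by
          have := iter_hist_len G σ τ (α, v, d) n hrestn
          rw [hcfg] at this; exact this
        -- τs agrees with τ along the first n steps
        have hEq : ∀ m ≤ n,
            (G.step σ τs)^[m] (α, v, d) = (G.step σ τ)^[m] (α, v, d) := by
          intro m hm
          induction m with
          | zero => rfl
          | succ m ihm =>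
            have hm' : m ≤ n := Nat.le_of_succ_le hm
            rw [Function.iterate_succ_apply', Function.iterate_succ_apply',
              ihm hm']
            have hrm : ((G.step σ τ)^[m] (α, v, d)).2.1 ≠ [] :=
              rest_ne_of_le G σ τ _ hm' hrestn
            have hlm : ((G.step σ τ)^[m] (α, v, d)).1.length = α.length + m :=
              iter_hist_len G σ τ (α, v, d) m hrm
            have hnp : ¬ (γ <+: ((G.step σ τ)^[m] (α, v, d)).1) := by
              intro hp
              have := hp.length_le
              omega
            rcases hc : (G.step σ τ)^[m] (α, v, d) with ⟨γ', rest', e'⟩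
            rw [hc] at hnp
            simp only at hnp
            match rest' with
            | [] => rw [step_nil, step_nil]
            | (b', j') :: r' =>
              by_cases hcc : G.Fn b' ∧ σ γ' b' = JMove.call
              · rw [step_cons_call G σ τs _ _ _ _ _ hcc,
                  step_cons_call G σ τ _ _ _ _ _ hcc]
                have : τs γ' b' = τ γ' b' := by
                  simp only [hτs]
                  split
                  · exact absurd (by assumption) hnp
                  · rfl
                rw [this]
              · rw [step_cons_read G σ τs _ _ _ _ _ hcc,
                  step_cons_read G σ τ _ _ _ _ _ hcc]
        -- the τs-play never terminates
        have hnever : ∀ N, ((G.step σ τs)^[N] (α, v, d)).2.1 ≠ [] := by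
          intro N
          rcases Nat.le_total N n with hN | hN
          · rw [hEq N hN]
            exact rest_ne_of_le G σ τ _ hN hrestn
          · obtain ⟨m, rfl⟩ := Nat.exists_eq_add_of_le hN
            rw [Nat.add_comm, Function.iterate_add_apply, hEq n le_rfl, hcfg]
            -- sub-play from (γ, [(b,j)], e) with τs equals the one with τ''
            have hagree : ∀ γ', γ <+: γ' → ∀ b', τs γ' b' = τ'' γ' b' := by
              intro γ' hp b'
              simp only [hτs]
              split
              · rfl
              · exact absurd hp (by assumption)
            have hsub : ∀ m', ((G.step σ τs)^[m'] (γ, [(b, j)], e)).2.1 ≠ [] := by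
              intro m'
              rw [iter_congr_tau G σ τs τ'' γ hagree [(b, j)] e m']
              intro hemp
              have := (iter_indep G σ τ'' m' γ [(b, j)] [(b, 0)] e 0 (by simp)).2
              rw [hemp] at this
              exact hinf m' (List.map_eq_nil_iff.mp this.symm)
            have := (iter_append G σ τs γ [(b, j)] r e e m (hsub m)).2
            rw [show ([(b, j)] ++ r : List (A × ℕ)) = (b, j) :: r from rfl] at this
            rw [this]
            simp [hsub m]
        obtain ⟨N, hNe⟩ := hg τs hτsv d
        exact hnever N hNe
      exact step_congr_sigma G (tame G σ) σ τ γ b j r e (tame_of_good hgood)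

lemma goodFrom_single {G : CFGame A} {σ : JStrat A} {α : List (HSym A)} {a : A}
    (h : goodAt G σ α a) (k : ℕ) : goodFrom G σ α [(a, k)] := by
  intro τ hτ d
  exact goodAt_of_goodFrom h τ hτ

/-- The tamed strategy terminates on single symbols. -/
lemma tame_term_single (G : CFGame A) (σ : JStrat A) (τ : RStrat A)
    (hτ : G.RValid τ) (α : List (HSym A)) (a : A) (k d : ℕ) :
    ∃ n, ((G.step (tame G σ) τ)^[n] (α, [(a, k)], d)).2.1 = [] := by
  by_cases h : goodAt G σ α a
  · obtain ⟨n, hn⟩ := goodAt_of_goodFrom h τ hτ (k := k) (d := d)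
    refine ⟨n, ?_⟩
    rw [tame_play_eq G σ α [(a, k)] d (goodFrom_single h k) τ hτ n]
    exact hn
  · refine ⟨1, ?_⟩
    have hr : ¬ (G.Fn a ∧ tame G σ α a = JMove.call) := by
      rintro ⟨-, hc⟩
      rw [tame_of_not_good h] at hc
      exact JMove.noConfusion hc
    simp only [Function.iterate_one]
    rw [step_cons_read G (tame G σ) τ _ _ _ _ _ hr]

/-- The tamed strategy terminates from every configuration. -/
lemma tame_term (G : CFGame A) (σ : JStrat A) (τ : RStrat A) (hτ : G.RValid τ) :
    ∀ (v : List (A × ℕ)) (α : List (HSym A)) (d : ℕ),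
    ∃ n, ((G.step (tame G σ) τ)^[n] (α, v, d)).2.1 = [] := by
  intro v
  induction v with
  | nil => intro α d; exact ⟨0, rfl⟩
  | cons p r ih =>
    intro α d
    obtain ⟨a, k⟩ := p
    classical
    obtain ⟨n, hn⟩ := tame_term_single G σ τ hτ α a k d
    have hex : ∃ n, ((G.step (tame G σ) τ)^[n] (α, [(a, k)], d)).2.1 = [] := ⟨n, hn⟩
    set N := Nat.find hex with hN
    have hNe := Nat.find_spec hex
    have hNmin : ∀ m < N, ((G.step (tame G σ) τ)^[m] (α, [(a, k)], d)).2.1 ≠ [] :=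
      fun m hm => Nat.find_min hex hm
    obtain ⟨h1, h2⟩ := iter_append_empty G (tame G σ) τ hτ α [(a, k)] r d d
      (by simp) N hNe hNmin
    obtain ⟨m, hm⟩ := ih (((G.step (tame G σ) τ)^[N] (α, (a, k) :: r, d)).1)
      (((G.step (tame G σ) τ)^[N] (α, (a, k) :: r, d)).2.2)
    refine ⟨m + N, ?_⟩
    rw [Function.iterate_add_apply]
    have hc : (G.step (tame G σ) τ)^[N] (α, (a, k) :: r, d) =
        (((G.step (tame G σ) τ)^[N] (α, (a, k) :: r, d)).1, r,
         ((G.step (tame G σ) τ)^[N] (α, (a, k) :: r, d)).2.2) := by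
      have : ([(a, k)] ++ r : List (A × ℕ)) = (a, k) :: r := rfl
      rw [this] at h2
      exact Prod.ext rfl (Prod.ext h2 rfl)
    rw [hc]
    exact hm

end Tame

theorem statement0 {A : Type} [Fintype A] (G : CFGame A) (σ : JStrat A) :
    ∃ σ' : JStrat A, G.Terminating σ' ∧ G.W σ ⊆ G.W σ' := by
  refine ⟨tame G σ, ?_, ?_⟩
  · intro τ hτ w
    exact tame_term G σ τ hτ (w.map (fun a => (a, 0))) [] 0
  · intro w hw
    intro τ hτ
    have hg : goodFrom G σ [] (w.map (fun a => (a, 0))) := by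
      intro τ' hτ' d
      obtain ⟨n, hn, -⟩ := hw τ' hτ'
      refine ⟨n, ?_⟩
      have := (iter_indep G σ τ' n [] (w.map (fun a => (a, 0)))
        (w.map (fun a => (a, 0))) d 0 rfl).2
      rw [show ((G.step σ τ')^[n] ([], w.map (fun a => (a, 0)), 0)).2.1 = []
        from hn] at this
      exact List.map_eq_nil_iff.mp this
    obtain ⟨n, hn, hacc⟩ := hw τ hτ
    refine ⟨n, ?_, ?_⟩
    · show ((G.step (tame G σ) τ)^[n] ([], w.map (fun a => (a, 0)), 0)).2.1 = []
      rw [tame_play_eq G σ [] (w.map (fun a => (a, 0))) 0 hg τ hτ n]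
      exact hn
    · show G.T.evalFrom G.T.start
        (flat ((G.step (tame G σ) τ)^[n] ([], w.map (fun a => (a, 0)), 0)).1) ∈ G.T.accept
      rw [tame_play_eq G σ [] (w.map (fun a => (a, 0))) 0 hg τ hτ n]
      exact hacc

end CFG
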